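/- For every r with 1 ≤ r < R_I, one has T̄_r ≤ log₂(15/Δ₂) and H_r ≤ 900 · T̄_r · ψ*; consequently H_r ≤ 900 · log₂(15/Δ₂) · ψ*. -/

import Mathlib

open Matrix

noncomputable section

/-- The probability simplex of design weights over the arm set `X`. -/
def designSimplex {d : ℕ} (X : Finset (Fin d → ℝ)) : Set ((Fin d → ℝ) → ℝ) :=
  {l | (∀ x, 0 ≤ l x) ∧ ∑ x ∈ X, l x = 1}

/-- The design matrix `A(λ) = ∑_{x ∈ X} λ_x x xᵀ`. -/
def designMat {d : ℕ} (X : Finset (Fin d → ℝ)) (l : (Fin d → ℝ) → ℝ) :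
    Matrix (Fin d) (Fin d) ℝ :=
  ∑ x ∈ X, l x • Matrix.vecMulVec x x

/-- The quadratic form `y ↦ yᵀ A(λ)⁻¹ y`. -/
def quadInv {d : ℕ} (X : Finset (Fin d → ℝ)) (l : (Fin d → ℝ) → ℝ)
    (y : Fin d → ℝ) : ℝ :=
  y ⬝ᵥ (designMat X l)⁻¹.mulVec y

/-- The optimal design value `ρ(A) = inf_{λ : A(λ) invertible} max_{y ∈ A} yᵀA(λ)⁻¹y`
(the maximum over the empty set being `0`). -/
def rho {d : ℕ} (X : Finset (Fin d → ℝ)) (A : Set (Fin d → ℝ)) : ℝ :=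
  sInf {v | ∃ l ∈ designSimplex X, IsUnit (designMat X l).det ∧
    v = sSup (insert 0 (quadInv X l '' A))}

/-- `𝒴(S) = {x - x' : x, x' ∈ S, x ≠ x'}`. -/
def Yset {d : ℕ} (S : Set (Fin d → ℝ)) : Set (Fin d → ℝ) :=
  {y | ∃ x ∈ S, ∃ x' ∈ S, x ≠ x' ∧ y = x - x'}

/-- `𝒴*(S) = {x* - x : x ∈ S, x ≠ x*}`. -/
def YstarSet {d : ℕ} (xstar : Fin d → ℝ) (S : Set (Fin d → ℝ)) : Set (Fin d → ℝ) :=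
  (fun x => xstar - x) '' (S \ {xstar})

/-- `ψ* = inf_{λ : A(λ) invertible} max_{x ∈ X, x ≠ x*} (x-x*)ᵀA(λ)⁻¹(x-x*)/Δ_x²`. -/
def psiStar {d : ℕ} (X : Finset (Fin d → ℝ)) (θstar xstar : Fin d → ℝ) : ℝ :=
  sInf {v | ∃ l ∈ designSimplex X, IsUnit (designMat X l).det ∧
    v = sSup (insert 0
      ((fun x => quadInv X l (x - xstar) / (θstar ⬝ᵥ (xstar - x)) ^ 2) ''
        ((X : Set (Fin d → ℝ)) \ {xstar})))}

/-!
Fix a design `λ`. Since `x - x' = (x - x*) - (x' - x*)`, the parallelogram law for the form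
`A(λ)⁻¹` bounds every direction of `𝒴(S)` by `4 D²` times the `ψ*`-objective of `λ` as soon as
all gaps in `S` are at most `D`; taking infima, `ρ(𝒴(S)) ≤ 4 D² ψ*`. The arms surviving in the
`t`-th summand of `H_r` have gap at most `15·2^{-t}`, so each summand is at most
`4^t · 4 · (15·2^{-t})² ψ* = 900 ψ*`. Finally `U_r ≠ X ∖ {x*}` yields an arm with gap at most
`15·2^{-T̄_r}`, so `Δ₂ ≤ 15·2^{-T̄_r}`.
-/

theorem Matrix.PosSemidef.dotProduct_mulVec_sub_le {n : Type*} [Fintype n]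
    {M : Matrix n n ℝ} (hM : M.PosSemidef) (a b : n → ℝ) :
    (a - b) ⬝ᵥ M *ᵥ (a - b) ≤ 2 * (a ⬝ᵥ M *ᵥ a) + 2 * (b ⬝ᵥ M *ᵥ b) := by
  have hsum : 0 ≤ (a + b) ⬝ᵥ M *ᵥ (a + b) := by
    simpa using hM.dotProduct_mulVec_nonneg (a + b)
  have parallelogram : (a - b) ⬝ᵥ M *ᵥ (a - b) + (a + b) ⬝ᵥ M *ᵥ (a + b) =
      2 * (a ⬝ᵥ M *ᵥ a) + 2 * (b ⬝ᵥ M *ᵥ b) := by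
    simp only [mulVec_add, mulVec_sub, dotProduct_add, dotProduct_sub, add_dotProduct,
      sub_dotProduct]
    ring
  linarith

/-- With no admissible index both infima are `sInf ∅ = 0`. -/
theorem Real.sInf_le_mul_sInf_of_le_mul {ι : Type*} {I : Set ι} {Q : ι → Prop} {f g : ι → ℝ}
    {c : ℝ} (hc : 0 ≤ c) (hf : ∀ i ∈ I, Q i → 0 ≤ f i) (hfg : ∀ i ∈ I, Q i → f i ≤ c * g i) :
    sInf {v | ∃ i ∈ I, Q i ∧ v = f i} ≤ c * sInf {v | ∃ i ∈ I, Q i ∧ v = g i} := by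
  rcases Set.eq_empty_or_nonempty {v | ∃ i ∈ I, Q i ∧ v = g i} with hG | ⟨_, i, hi, hQi, rfl⟩
  · have hF : {v | ∃ i ∈ I, Q i ∧ v = f i} = ∅ :=
      Set.eq_empty_of_forall_notMem fun _ ⟨i, hi, hQi, _⟩ =>
        hG.subset ⟨i, hi, hQi, rfl⟩
    rw [hF, hG, Real.sInf_empty, mul_zero]
  · have hbdd : BddBelow {v | ∃ i ∈ I, Q i ∧ v = f i} := by
      refine ⟨0, ?_⟩
      rintro _ ⟨j, hj, hQj, rfl⟩
      exact hf j hj hQj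
    rw [← smul_eq_mul, ← Real.sInf_smul_of_nonneg hc]
    refine le_csInf ⟨_, Set.smul_mem_smul_set ⟨i, hi, hQi, rfl⟩⟩ ?_
    rintro _ ⟨_, ⟨j, hj, hQj, rfl⟩, rfl⟩
    exact (csInf_le hbdd ⟨j, hj, hQj, rfl⟩).trans (hfg j hj hQj)

theorem Real.sqrt_four_pow (n : ℕ) : √((4 : ℝ) ^ n) = 2 ^ n := by
  rw [show (4 : ℝ) ^ n = (2 ^ n) ^ 2 by rw [← pow_mul, mul_comm, pow_mul]; norm_num]
  exact Real.sqrt_sq (by positivity)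

theorem Real.natCast_le_logb_two_of_pow_le {n : ℕ} {y : ℝ} (h : (2 : ℝ) ^ n ≤ y) :
    (n : ℝ) ≤ Real.logb 2 y := by
  rw [Real.le_logb_iff_rpow_le one_lt_two (lt_of_lt_of_le (by positivity) h)]
  exact_mod_cast h

section Design

variable {d : ℕ} {X : Finset (Fin d → ℝ)} {θstar xstar : Fin d → ℝ}

theorem designMat_posSemidef {l : (Fin d → ℝ) → ℝ} (hl : l ∈ designSimplex X) :
    (designMat X l).PosSemidef :=
  posSemidef_sum X fun x _ => by
    simpa using (posSemidef_vecMulVec_self_star x).smul (hl.1 x)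

theorem quadInv_nonneg {l : (Fin d → ℝ) → ℝ} (hl : l ∈ designSimplex X) (y : Fin d → ℝ) :
    0 ≤ quadInv X l y := by
  simpa [quadInv] using (designMat_posSemidef hl).inv.dotProduct_mulVec_nonneg y

theorem quadInv_sub_le {l : (Fin d → ℝ) → ℝ} (hl : l ∈ designSimplex X) (a b : Fin d → ℝ) :
    quadInv X l (a - b) ≤ 2 * quadInv X l a + 2 * quadInv X l b :=
  (designMat_posSemidef hl).inv.dotProduct_mulVec_sub_le a b

-- `rho X A` and `psiStar X θstar xstar` are, by definition, the infima of these objectives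
-- over the invertible designs.
variable (X) in
def rhoObjective (A : Set (Fin d → ℝ)) (l : (Fin d → ℝ) → ℝ) : ℝ :=
  sSup (insert 0 (quadInv X l '' A))

variable (X θstar xstar) in
def psiObjective (l : (Fin d → ℝ) → ℝ) : ℝ :=
  sSup (insert 0 ((fun x => quadInv X l (x - xstar) / (θstar ⬝ᵥ (xstar - x)) ^ 2) ''
    ((X : Set (Fin d → ℝ)) \ {xstar})))

theorem rhoObjective_nonneg {l : (Fin d → ℝ) → ℝ} (hl : l ∈ designSimplex X)
    (A : Set (Fin d → ℝ)) : 0 ≤ rhoObjective X A l := by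
  refine Real.sSup_nonneg ?_
  rintro _ (rfl | ⟨y, -, rfl⟩)
  exacts [le_rfl, quadInv_nonneg hl y]

theorem psiObjective_bddAbove (l : (Fin d → ℝ) → ℝ) :
    BddAbove (insert 0 ((fun x => quadInv X l (x - xstar) / (θstar ⬝ᵥ (xstar - x)) ^ 2) ''
      ((X : Set (Fin d → ℝ)) \ {xstar}))) :=
  (((X.finite_toSet.sdiff).image _).insert 0).bddAbove

theorem psiObjective_nonneg (l : (Fin d → ℝ) → ℝ) : 0 ≤ psiObjective X θstar xstar l :=
  le_csSup (psiObjective_bddAbove l) (Set.mem_insert 0 _)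

theorem quadInv_div_sq_le_psiObjective (l : (Fin d → ℝ) → ℝ) {z : Fin d → ℝ} (hz : z ∈ X)
    (hzx : z ≠ xstar) :
    quadInv X l (z - xstar) / (θstar ⬝ᵥ (xstar - z)) ^ 2 ≤ psiObjective X θstar xstar l :=
  le_csSup (psiObjective_bddAbove l) (Set.mem_insert_of_mem 0 ⟨z, ⟨hz, hzx⟩, rfl⟩)

theorem psiStar_nonneg : 0 ≤ psiStar X θstar xstar :=
  Real.sInf_nonneg fun _ ⟨l, _, _, hv⟩ => hv ▸ psiObjective_nonneg l

theorem gap_pos (hmax : ∀ x ∈ X, x ≠ xstar → θstar ⬝ᵥ x < θstar ⬝ᵥ xstar)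
    {x : Fin d → ℝ} (hx : x ∈ X) (hne : x ≠ xstar) : 0 < θstar ⬝ᵥ (xstar - x) := by
  rw [dotProduct_sub]
  exact sub_pos.2 (hmax x hx hne)

theorem quadInv_sub_xstar_le (hmax : ∀ x ∈ X, x ≠ xstar → θstar ⬝ᵥ x < θstar ⬝ᵥ xstar)
    (l : (Fin d → ℝ) → ℝ) {z : Fin d → ℝ} (hz : z ∈ X) {D : ℝ}
    (hgap : θstar ⬝ᵥ (xstar - z) ≤ D) :
    quadInv X l (z - xstar) ≤ D ^ 2 * psiObjective X θstar xstar l := by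
  have hψ := psiObjective_nonneg (X := X) (θstar := θstar) (xstar := xstar) l
  by_cases hzx : z = xstar
  · simp only [hzx, sub_self, quadInv, mulVec_zero, dotProduct_zero]
    positivity
  have hΔ := gap_pos hmax hz hzx
  have hratio := quadInv_div_sq_le_psiObjective (θstar := θstar) l hz hzx
  calc quadInv X l (z - xstar)
      ≤ (θstar ⬝ᵥ (xstar - z)) ^ 2 * psiObjective X θstar xstar l := by
        rwa [div_le_iff₀' (by positivity)] at hratio
    _ ≤ D ^ 2 * psiObjective X θstar xstar l := by gcongr

theorem rhoObjective_Yset_le (hmax : ∀ x ∈ X, x ≠ xstar → θstar ⬝ᵥ x < θstar ⬝ᵥ xstar)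
    {l : (Fin d → ℝ) → ℝ} (hl : l ∈ designSimplex X) {S : Set (Fin d → ℝ)}
    (hS : S ⊆ X) {D : ℝ} (hgap : ∀ x ∈ S, θstar ⬝ᵥ (xstar - x) ≤ D) :
    rhoObjective X (Yset S) l ≤ 4 * D ^ 2 * psiObjective X θstar xstar l := by
  have hψ := psiObjective_nonneg (X := X) (θstar := θstar) (xstar := xstar) l
  refine Real.sSup_le ?_ (by positivity)
  rintro _ (rfl | ⟨_, ⟨x, hx, x', hx', -, rfl⟩, rfl⟩)
  · positivity
  have hxD := quadInv_sub_xstar_le hmax l (hS hx) (hgap x hx)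
  have hx'D := quadInv_sub_xstar_le hmax l (hS hx') (hgap x' hx')
  calc quadInv X l (x - x') = quadInv X l ((x - xstar) - (x' - xstar)) := by
        rw [sub_sub_sub_cancel_right]
    _ ≤ 2 * quadInv X l (x - xstar) + 2 * quadInv X l (x' - xstar) := quadInv_sub_le hl _ _
    _ ≤ 4 * D ^ 2 * psiObjective X θstar xstar l := by linarith

theorem rho_Yset_le (hmax : ∀ x ∈ X, x ≠ xstar → θstar ⬝ᵥ x < θstar ⬝ᵥ xstar)
    {S : Set (Fin d → ℝ)} (hS : S ⊆ X) {D : ℝ} (hgap : ∀ x ∈ S, θstar ⬝ᵥ (xstar - x) ≤ D) :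
    rho X (Yset S) ≤ 4 * D ^ 2 * psiStar X θstar xstar :=
  Real.sInf_le_mul_sInf_of_le_mul (f := rhoObjective X (Yset S))
    (g := psiObjective X θstar xstar) (by positivity)
    (fun _ hl _ => rhoObjective_nonneg hl _)
    (fun _ hl _ => rhoObjective_Yset_le hmax hl hS hgap)

theorem exists_gap_le_of_filter_ne {ε : ℝ} (hε : 0 ≤ ε)
    (hne : X.filter (fun x => ε < θstar ⬝ᵥ (xstar - x)) ≠ X.erase xstar) :
    ∃ x ∈ X, x ≠ xstar ∧ θstar ⬝ᵥ (xstar - x) ≤ ε := by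
  have hsub : X.filter (fun x => ε < θstar ⬝ᵥ (xstar - x)) ⊆ X.erase xstar := by
    intro x hx
    rw [Finset.mem_filter] at hx
    refine Finset.mem_erase.2 ⟨?_, hx.1⟩
    rintro rfl
    simp only [sub_self, dotProduct_zero] at hx
    linarith [hx.2]
  obtain ⟨x, hx, hxU⟩ := Finset.exists_of_ssubset (hsub.ssubset_of_ne hne)
  have hxX := Finset.mem_of_mem_erase hx
  exact ⟨x, hxX, Finset.ne_of_mem_erase hx,
    not_lt.1 fun h => hxU (Finset.mem_filter.2 ⟨hxX, h⟩)⟩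

theorem four_pow_mul_rho_le (hmax : ∀ x ∈ X, x ≠ xstar → θstar ⬝ᵥ x < θstar ⬝ᵥ xstar)
    {t T : ℕ} (htT : t ≤ T) :
    (4 : ℝ) ^ t * rho X (Yset ((X : Set (Fin d → ℝ)) \
      {x | x ∈ X.filter (fun x => 15 / 2 ^ T < θstar ⬝ᵥ (xstar - x)) ∧
        15 / 2 ^ t < θstar ⬝ᵥ (xstar - x)})) ≤ 900 * psiStar X θstar xstar := by
  have hgap : ∀ x ∈ (X : Set (Fin d → ℝ)) \
      {x | x ∈ X.filter (fun x => 15 / 2 ^ T < θstar ⬝ᵥ (xstar - x)) ∧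
        15 / 2 ^ t < θstar ⬝ᵥ (xstar - x)}, θstar ⬝ᵥ (xstar - x) ≤ 15 / 2 ^ t := by
    rintro x ⟨hx, hxU⟩
    by_contra! h
    have hTt : (15 : ℝ) / 2 ^ T ≤ 15 / 2 ^ t := by gcongr; norm_num
    exact hxU ⟨Finset.mem_filter.2 ⟨hx, hTt.trans_lt h⟩, h⟩
  have h4 : (4 : ℝ) ^ t = (2 ^ t) ^ 2 := by
    rw [← pow_mul, mul_comm, pow_mul]; norm_num
  calc _ ≤ (4 : ℝ) ^ t * (4 * (15 / 2 ^ t) ^ 2 * psiStar X θstar xstar) := by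
        gcongr
        exact rho_Yset_le hmax Set.sdiff_subset hgap
    _ = 900 * psiStar X θstar xstar := by
        rw [h4]
        field_simp
        ring

theorem sum_four_pow_mul_rho_le (hmax : ∀ x ∈ X, x ≠ xstar → θstar ⬝ᵥ x < θstar ⬝ᵥ xstar)
    (T : ℕ) :
    ∑ t ∈ Finset.Icc 1 T, (4 : ℝ) ^ t * rho X (Yset ((X : Set (Fin d → ℝ)) \
      {x | x ∈ X.filter (fun x => 15 / 2 ^ T < θstar ⬝ᵥ (xstar - x)) ∧
        15 / 2 ^ t < θstar ⬝ᵥ (xstar - x)})) ≤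
      900 * T * psiStar X θstar xstar :=
  calc _ ≤ ∑ _t ∈ Finset.Icc 1 T, 900 * psiStar X θstar xstar :=
        Finset.sum_le_sum fun _ ht => four_pow_mul_rho_le hmax (Finset.mem_Icc.1 ht).2
    _ = 900 * T * psiStar X θstar xstar := by
        rw [Finset.sum_const, Nat.card_Icc, nsmul_eq_mul, Nat.add_sub_cancel]
        ring

end Design

theorem linear_Hr_upper_bound_general {d : ℕ} (X : Finset (Fin d → ℝ))
    (θstar xstar : Fin d → ℝ)
    (hmax : ∀ x ∈ X, x ≠ xstar → θstar ⬝ᵥ x < θstar ⬝ᵥ xstar)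
    (Δ₂ : ℝ)
    (hΔ₂mem : ∃ x ∈ X, x ≠ xstar ∧ Δ₂ = θstar ⬝ᵥ (xstar - x))
    (hΔ₂min : ∀ x ∈ X, x ≠ xstar → Δ₂ ≤ θstar ⬝ᵥ (xstar - x))
    (Tbar : ℕ → ℕ) (Lbar : ℕ → ℝ) (U : ℕ → Finset (Fin d → ℝ)) (H : ℕ → ℝ)
    (R : ℕ)
    (hLbar : ∀ r, Lbar r = 4 ^ Tbar r)
    (hU : ∀ r, U r = X.filter (fun x => 15 / Real.sqrt (Lbar r) < θstar ⬝ᵥ (xstar - x)))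
    (hH : ∀ r, H r = ∑ t ∈ Finset.Icc 1 (Tbar r), (4 : ℝ) ^ t *
      rho X (Yset ((X : Set (Fin d → ℝ)) \
        {x | x ∈ U r ∧ 15 / 2 ^ t < θstar ⬝ᵥ (xstar - x)})))
    (hRleast : ∀ r, 1 ≤ r → r < R → U r ≠ X.erase xstar) :
    ∀ r, 1 ≤ r → r < R →
      (Tbar r : ℝ) ≤ Real.logb 2 (15 / Δ₂)
      ∧ H r ≤ 900 * Tbar r * psiStar X θstar xstar
      ∧ H r ≤ 900 * Real.logb 2 (15 / Δ₂) * psiStar X θstar xstar := by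
  intro r hr1 hrR
  have hUr : U r = X.filter (fun x => 15 / 2 ^ Tbar r < θstar ⬝ᵥ (xstar - x)) := by
    rw [hU, hLbar, Real.sqrt_four_pow]
  have hΔ₂pos : 0 < Δ₂ := by
    obtain ⟨x, hx, hxs, rfl⟩ := hΔ₂mem
    exact gap_pos hmax hx hxs
  have hT : (Tbar r : ℝ) ≤ Real.logb 2 (15 / Δ₂) := by
    obtain ⟨x, hx, hxs, hxle⟩ :=
      exists_gap_le_of_filter_ne (by positivity) (hUr ▸ hRleast r hr1 hrR)
    refine Real.natCast_le_logb_two_of_pow_le ?_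
    rw [le_div_comm₀ (by positivity) hΔ₂pos]
    exact (hΔ₂min x hx hxs).trans hxle
  have hHr : H r ≤ 900 * Tbar r * psiStar X θstar xstar := by
    rw [hH, hUr]
    exact sum_four_pow_mul_rho_le hmax (Tbar r)
  refine ⟨hT, hHr, hHr.trans ?_⟩
  gcongr
  exact psiStar_nonneg

theorem linear_Hr_upper_bound {d : ℕ} (X : Finset (Fin d → ℝ))
    (θstar xstar : Fin d → ℝ)
    (hspan : Submodule.span ℝ (X : Set (Fin d → ℝ)) = ⊤)
    (hnorm : ∀ x ∈ X, x ⬝ᵥ x ≤ 1)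
    (hxstar : xstar ∈ X)
    (hmax : ∀ x ∈ X, x ≠ xstar → θstar ⬝ᵥ x < θstar ⬝ᵥ xstar)
    (Δ₂ : ℝ)
    (hΔ₂mem : ∃ x ∈ X, x ≠ xstar ∧ Δ₂ = θstar ⬝ᵥ (xstar - x))
    (hΔ₂min : ∀ x ∈ X, x ≠ xstar → Δ₂ ≤ θstar ⬝ᵥ (xstar - x))
    (Tbar : ℕ → ℕ) (Lbar Lhat : ℕ → ℝ) (U : ℕ → Finset (Fin d → ℝ)) (H : ℕ → ℝ)
    (R : ℕ) (hR1 : 1 ≤ R)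
    (hT1 : Tbar 1 = 1)
    (hLbar : ∀ r, Lbar r = 4 ^ Tbar r)
    (hU : ∀ r, U r = X.filter (fun x => 15 / Real.sqrt (Lbar r) < θstar ⬝ᵥ (xstar - x)))
    (hH : ∀ r, H r = ∑ t ∈ Finset.Icc 1 (Tbar r), (4 : ℝ) ^ t *
      rho X (Yset ((X : Set (Fin d → ℝ)) \
        {x | x ∈ U r ∧ 15 / 2 ^ t < θstar ⬝ᵥ (xstar - x)})))
    (hLhat : ∀ r, 1 ≤ r → r < R →
      Lhat (r + 1) = 4 * Lbar r + H r / rho X (Yset ((X : Set (Fin d → ℝ)) \ ↑(U r))))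
    (hTsucc : ∀ r, 1 ≤ r → r < R →
      (4 : ℝ) ^ Tbar (r + 1) ≤ Lhat (r + 1) ∧ Lhat (r + 1) < (4 : ℝ) ^ (Tbar (r + 1) + 1))
    (hRmem : U R = X.erase xstar)
    (hRleast : ∀ r, 1 ≤ r → r < R → U r ≠ X.erase xstar) :
    ∀ r, 1 ≤ r → r < R →
      (Tbar r : ℝ) ≤ Real.logb 2 (15 / Δ₂)
      ∧ H r ≤ 900 * Tbar r * psiStar X θstar xstar
      ∧ H r ≤ 900 * Real.logb 2 (15 / Δ₂) * psiStar X θstar xstar :=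
  linear_Hr_upper_bound_general X θstar xstar hmax Δ₂ hΔ₂mem hΔ₂min Tbar Lbar U H R hLbar hU hH
    hRleast
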